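/- Let a, b, x, y ∈ ℝ/ℤ and d ≥ 2 with σ_d(x) ∉ {σ_d(a), σ_d(b)} and σ_d(y) ∉ {σ_d(a), σ_d(b)}, and suppose the chord from σ_d(x) to σ_d(y) is disjoint from the chord from σ_d(a) to σ_d(b). Then each of the two open arcs of the circle determined by x and y contains the same number of σ_d-preimages of σ_d(a) as of σ_d(b). -/

import Mathlib

open scoped Real

instance : Fact ((0 : ℝ) < 1) := ⟨one_pos⟩

/-- The angle `d`-tupling map `σ_d(θ) = d·θ (mod 1)` on the circle `ℝ/ℤ`. -/
noncomputable def sigmaMap (d : ℕ) (θ : UnitAddCircle) : UnitAddCircle := d • θ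

/-- The position in `[0,1)` of a point of `ℝ/ℤ`. -/
noncomputable def circPos (x : UnitAddCircle) : ℝ := ((AddCircle.equivIco 1 0) x : ℝ)

/-- `t` lies strictly inside the counterclockwise open arc from `a` to `b`. -/
noncomputable def InOpenArc (a b t : UnitAddCircle) : Prop :=
  0 < circPos (t - a) ∧ circPos (t - a) < circPos (b - a)

lemma circPos_coe (r : ℝ) : circPos (r : UnitAddCircle) = Int.fract r := by
  simp [circPos, AddCircle.coe_equivIco_mk_apply]

lemma circPos_mem (x : UnitAddCircle) : circPos x ∈ Set.Ico (0:ℝ) 1 := by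
  simpa [circPos] using ((AddCircle.equivIco 1 0) x).2

lemma coe_circPos (x : UnitAddCircle) : ((circPos x : ℝ) : UnitAddCircle) = x := by
  exact (AddCircle.equivIco 1 0).symm_apply_apply x

lemma circPos_injective : Function.Injective circPos := fun x y h => by
  rw [← coe_circPos x, ← coe_circPos y, h]

lemma fract_sub_of_Ico {s t : ℝ} (hs : s ∈ Set.Ico (0:ℝ) 1) (ht : t ∈ Set.Ico (0:ℝ) 1) :
    Int.fract (t - s) = if s ≤ t then t - s else t - s + 1 := by
  obtain ⟨hs0, hs1⟩ := hs; obtain ⟨ht0, ht1⟩ := ht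
  split_ifs with h
  · exact Int.fract_eq_self.mpr ⟨by linarith, by linarith⟩
  · rw [← Int.fract_add_one (t - s)]
    exact Int.fract_eq_self.mpr ⟨by linarith, by linarith⟩

lemma floor_sub_of_Ico (w : ℝ) {c : ℝ} (hc : c ∈ Set.Ico (0:ℝ) 1) :
    ⌊w - c⌋ = ⌊w⌋ + if c ≤ Int.fract w then 0 else -1 := by
  have hw : w - c = (Int.fract w - c) + ⌊w⌋ := by rw [Int.fract]; ring
  rw [hw, Int.floor_add_intCast]
  have h0 := Int.fract_nonneg w
  have h1 := Int.fract_lt_one w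
  split_ifs with h
  · rw [Int.floor_eq_zero_iff.mpr ⟨by linarith, by linarith [hc.1]⟩]; ring
  · push_neg at h
    have : ⌊Int.fract w - c⌋ = -1 := by
      rw [Int.floor_eq_iff]
      constructor <;> push_cast <;> [linarith [hc.2]; linarith]
    rw [this]; ring

lemma G_eq {α' β' p q : ℝ} (hα : α' ∈ Set.Ico (0:ℝ) 1) (hβ : β' ∈ Set.Ico (0:ℝ) 1)
    (hpα : p ≠ α') (hpβ : p ≠ β') (hqα : q ≠ α') (hqβ : q ≠ β')
    (hiff : ((α' ≤ p ↔ β' ≤ p) ↔ (α' ≤ q ↔ β' ≤ q)))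
    {w₁ w₂ : ℝ} (h1 : Int.fract w₁ = p) (h2 : Int.fract w₂ = q) :
    ⌊w₁ - α'⌋ - ⌊w₁ - β'⌋ = ⌊w₂ - α'⌋ - ⌊w₂ - β'⌋ := by
  rw [floor_sub_of_Ico w₁ hα, floor_sub_of_Ico w₁ hβ, floor_sub_of_Ico w₂ hα,
    floor_sub_of_Ico w₂ hβ, h1, h2]
  have h12 : (α' ≤ p ↔ β' ≤ p) ↔ (α' ≤ q ↔ β' ≤ q) := hiff
  split_ifs <;> try omega
  all_goals exfalso
  all_goals try itauto
  all_goals (push_neg at *; linarith)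

lemma coe_zero' : (((0:ℝ) : UnitAddCircle)) = 0 := by norm_cast

lemma circPos_eq_zero_iff {z : UnitAddCircle} : circPos z = 0 ↔ z = 0 := by
  constructor
  · intro h
    rw [← coe_circPos z, h, coe_zero']
  · rintro rfl
    rw [← coe_zero', circPos_coe]
    simp

lemma coe_fract (r : ℝ) : ((Int.fract r : ℝ) : UnitAddCircle) = (r : UnitAddCircle) := by
  apply circPos_injective
  rw [circPos_coe, circPos_coe, Int.fract_fract]

lemma coe_add_int (r : ℝ) (j : ℤ) : ((r + j : ℝ) : UnitAddCircle) = (r : UnitAddCircle) := by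
  rw [← coe_fract (r + j), Int.fract_add_intCast, coe_fract]

lemma circPos_sub (t a : UnitAddCircle) :
    circPos (t - a) = Int.fract (circPos t - circPos a) := by
  conv_lhs => rw [← coe_circPos t, ← coe_circPos a, ← AddCircle.coe_sub]
  rw [circPos_coe]

lemma inOpenArc_iff {a b t : UnitAddCircle} (hab : a ≠ b) (hta : t ≠ a) (htb : t ≠ b) :
    InOpenArc a b t ↔
      ((circPos a ≤ circPos t ↔ circPos b ≤ circPos t) ↔ circPos b < circPos a) := by
  have ha := circPos_mem a
  have hb := circPos_mem b
  have ht := circPos_mem t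
  have hab' : circPos a ≠ circPos b := fun h => hab (circPos_injective h)
  have hta' : circPos t ≠ circPos a := fun h => hta (circPos_injective h)
  have htb' : circPos t ≠ circPos b := fun h => htb (circPos_injective h)
  unfold InOpenArc
  rw [circPos_sub t a, circPos_sub b a, fract_sub_of_Ico ha ht, fract_sub_of_Ico ha hb]
  obtain ⟨ha0, ha1⟩ := ha
  obtain ⟨hb0, hb1⟩ := hb
  obtain ⟨ht0, ht1⟩ := ht
  split_ifs with h1 h2 h3
  · -- circPos a ≤ circPos t, circPos a ≤ circPos b
    have hC : ¬ (circPos b < circPos a) := not_lt.mpr h2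
    constructor
    · rintro ⟨hx, hy⟩
      have hB : ¬ (circPos b ≤ circPos t) := by intro hB; linarith
      simp [h1, hB, hC]
    · intro h
      have hB : ¬ (circPos b ≤ circPos t) := fun hB => hC (h.mp (iff_of_true h1 hB))
      push_neg at hB
      exact ⟨by have := lt_of_le_of_ne h1 hta'.symm; linarith, by linarith⟩
  · -- circPos a ≤ circPos t, ¬ circPos a ≤ circPos b
    push_neg at h2
    have hB : circPos b ≤ circPos t := by linarith
    have hA' : circPos a < circPos t := lt_of_le_of_ne h1 hta'.symm
    constructor
    · intro _; simp [h1, hB, h2]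
    · intro _; exact ⟨by linarith, by linarith⟩
  · -- ¬ circPos a ≤ circPos t, circPos a ≤ circPos b
    push_neg at h1
    have hC : ¬ (circPos b < circPos a) := not_lt.mpr h3
    have hB : ¬ (circPos b ≤ circPos t) := by intro hB; linarith
    constructor
    · rintro ⟨hx, hy⟩; exfalso; linarith
    · intro h; exfalso
      exact hC (h.mp (iff_of_false (not_le.mpr h1) hB))
  · -- ¬ circPos a ≤ circPos t, ¬ circPos a ≤ circPos b
    push_neg at h1 h3
    constructor
    · rintro ⟨hx, hy⟩
      have hB : ¬ (circPos b ≤ circPos t) := by intro hB; linarith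
      simp [not_le.mpr h1, hB, h3]
    · intro h
      have hB : ¬ (circPos b ≤ circPos t) := by
        intro hB
        have := h.mpr h3
        exact not_le.mpr h1 (this.mpr hB)
      push_neg at hB
      exact ⟨by linarith, by linarith⟩

lemma sigma_coe (d : ℕ) (r : ℝ) :
    sigmaMap d ((r : ℝ) : UnitAddCircle) = (((d : ℝ) * r : ℝ) : UnitAddCircle) := by
  rw [sigmaMap, ← AddCircle.coe_nsmul]
  norm_num [nsmul_eq_mul]

lemma count_arc (d : ℕ) (hd : 1 ≤ d) (α x y : UnitAddCircle)
    (hx : sigmaMap d x ≠ α) (hy : sigmaMap d y ≠ α) (hxy : x ≠ y) :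
    Nat.card {t : UnitAddCircle | sigmaMap d t = α ∧ InOpenArc x y t}
      = (⌊(d : ℝ) * circPos x + d * circPos (y - x) - circPos α⌋
         - ⌊(d : ℝ) * circPos x - circPos α⌋).toNat := by
  set X := circPos x with hX
  set L := circPos (y - x) with hLdef
  set A := circPos α with hA
  have hdR : (0:ℝ) < d := by exact_mod_cast Nat.lt_of_lt_of_le Nat.zero_lt_one hd
  have hL01 := circPos_mem (y - x)
  have hyx0 : y - x ≠ 0 := sub_ne_zero.mpr (Ne.symm hxy)
  have hL0 : 0 < L := lt_of_le_of_ne hL01.1 (fun h => hyx0 (circPos_eq_zero_iff.mp h.symm))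
  have hL1 : L < 1 := hL01.2
  set c : ℝ := ↑d * X - A with hc
  set M : ℝ := ↑d * L with hM
  have hM0 : 0 < M := by positivity
  have hMd : M < d := by
    rw [hM]
    calc (d:ℝ) * L < d * 1 := by apply mul_lt_mul_of_pos_left hL1 hdR
    _ = d := mul_one _
  have hXco : ((X : ℝ) : UnitAddCircle) = x := coe_circPos x
  have hLco : ((L : ℝ) : UnitAddCircle) = y - x := coe_circPos _
  have hAco : ((A : ℝ) : UnitAddCircle) = α := coe_circPos _
  have hXL : (((X + L : ℝ)) : UnitAddCircle) = y := by
    rw [AddCircle.coe_add, hXco, hLco]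
    abel
  have hsx : sigmaMap d x = (((d:ℝ) * X : ℝ) : UnitAddCircle) := by
    rw [← hXco, sigma_coe]
  have hsy : sigmaMap d y = (((d:ℝ) * (X + L) : ℝ) : UnitAddCircle) := by
    rw [← hXL, sigma_coe]
  -- the endpoints of the interval are not integers
  have hcint : ∀ j : ℤ, c ≠ (j : ℝ) := by
    intro j hj
    apply hx
    have : (d:ℝ) * X = A + j := by rw [hc] at hj; linarith
    rw [hsx, this, coe_add_int, hAco]
  have hcMint : ∀ j : ℤ, c + M ≠ (j : ℝ) := by
    intro j hj
    apply hy
    have : (d:ℝ) * (X + L) = A + j := by rw [hc] at hj; push_cast at hj ⊢; linarith [hj]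
    rw [hsy, this, coe_add_int, hAco]
  -- the bijection
  set T : Set ℤ := {j : ℤ | c < (j:ℝ) ∧ (j:ℝ) < c + M} with hT
  set S : Set UnitAddCircle := {t : UnitAddCircle | sigmaMap d t = α ∧ InOpenArc x y t} with hS
  have comp2 : ∀ j : ℤ, c < (j:ℝ) → (j:ℝ) < c + M →
      circPos ((((A + j)/d : ℝ) : UnitAddCircle) - x) = ((j : ℝ) - c)/d := by
    intro j hj1 hj2
    rw [← hXco, ← AddCircle.coe_sub, circPos_coe]
    have e : (A + (j:ℝ))/d - X = ((j:ℝ) - c)/d := by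
      rw [hc]; field_simp; ring
    rw [e]
    refine Int.fract_eq_self.mpr ⟨le_of_lt (div_pos (by linarith) hdR), ?_⟩
    rw [div_lt_one hdR]
    linarith
  have comp1 : ∀ j : ℤ, sigmaMap d (((A + j)/d : ℝ) : UnitAddCircle) = α := by
    intro j
    rw [sigma_coe]
    have e : (d:ℝ) * ((A + j)/d) = A + j := by field_simp
    rw [e, coe_add_int, hAco]
  have hfmem : ∀ j : ℤ, j ∈ T → ((((A + j)/d : ℝ) : UnitAddCircle)) ∈ S := by
    rintro j ⟨hj1, hj2⟩
    refine ⟨comp1 j, ?_, ?_⟩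
    · rw [comp2 j hj1 hj2]
      exact div_pos (by linarith) hdR
    · rw [comp2 j hj1 hj2, ← hLdef]
      rw [div_lt_iff₀ hdR]
      have : (j:ℝ) - c < M := by linarith
      rw [hM] at this
      linarith [this]
  let f : T → S := fun j => ⟨(((A + (j:ℤ))/d : ℝ) : UnitAddCircle), hfmem j j.2⟩
  have hinj : Function.Injective f := by
    rintro ⟨j1, hj1⟩ ⟨j2, hj2⟩ hf
    have h12 : ((((A + j1)/d : ℝ) : UnitAddCircle)) = (((A + j2)/d : ℝ) : UnitAddCircle) :=
      congrArg Subtype.val hf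
    have : ((j1 : ℝ) - c)/d = ((j2 : ℝ) - c)/d := by
      rw [← comp2 j1 hj1.1 hj1.2, ← comp2 j2 hj2.1 hj2.2, h12]
    have : (j1 : ℝ) = (j2 : ℝ) := by
      have hd0 : (d:ℝ) ≠ 0 := ne_of_gt hdR
      field_simp at this
      linarith
    exact Subtype.ext (by exact_mod_cast this)
  have hsurj : Function.Surjective f := by
    rintro ⟨t, hta, harc⟩
    set s : ℝ := circPos (t - x) with hs
    obtain ⟨hs0, hsL⟩ := harc
    have hsco : ((s : ℝ) : UnitAddCircle) = t - x := coe_circPos _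
    have hts : (((X + s : ℝ)) : UnitAddCircle) = t := by
      rw [AddCircle.coe_add, hXco, hsco]
      abel
    have hst : sigmaMap d t = (((d:ℝ) * (X + s) : ℝ) : UnitAddCircle) := by
      rw [← hts, sigma_coe]
    have hfract : Int.fract ((d:ℝ) * (X + s)) = A := by
      rw [← circPos_coe, ← hst, hta, hA]
    set j : ℤ := ⌊(d:ℝ) * (X + s)⌋ with hjdef
    have hAj : A + (j:ℝ) = (d:ℝ) * (X + s) := by
      rw [← hfract, Int.fract]
      ring
    have hcj : c + (d:ℝ) * s = (j : ℝ) := by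
      rw [hc]
      have := hAj
      linarith
    refine ⟨⟨j, ?_, ?_⟩, ?_⟩
    · rw [← hcj]
      nlinarith
    · rw [← hcj, hM]
      have : (d:ℝ) * s < d * L := by
        apply mul_lt_mul_of_pos_left hsL hdR
      linarith
    · apply Subtype.ext
      show (((A + (j:ℝ))/d : ℝ) : UnitAddCircle) = t
      rw [hAj]
      have e : (d:ℝ) * (X + s) / d = X + s := by field_simp
      rw [e, hts]
  have hcard : Nat.card T = Nat.card S := Nat.card_eq_of_bijective f ⟨hinj, hsurj⟩
  have hTIoc : T = Set.Ioc ⌊c⌋ ⌊c + M⌋ := by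
    ext j
    simp only [hT, Set.mem_setOf_eq, Set.mem_Ioc]
    constructor
    · rintro ⟨h1, h2⟩
      exact ⟨Int.floor_lt.mpr h1, Int.le_floor.mpr h2.le⟩
    · rintro ⟨h1, h2⟩
      refine ⟨Int.floor_lt.mp h1, lt_of_le_of_ne ?_ (fun h => hcMint j h.symm)⟩
      exact Int.le_floor.mp h2
  have hTcard : Nat.card T = (⌊c + M⌋ - ⌊c⌋).toNat := by
    rw [hTIoc, Nat.card_coe_set_eq, ← Finset.coe_Ioc, Set.ncard_coe_finset, Int.card_Ioc]
  rw [hS] at hcard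
  rw [← hcard, hTcard]
  congr 2
  rw [hc, hM]
  ring

lemma one_arc (d : ℕ) (hd : 2 ≤ d) (a b x y : UnitAddCircle)
    (hxa : sigmaMap d x ≠ sigmaMap d a) (hxb : sigmaMap d x ≠ sigmaMap d b)
    (hya : sigmaMap d y ≠ sigmaMap d a) (hyb : sigmaMap d y ≠ sigmaMap d b)
    (hab : sigmaMap d a ≠ sigmaMap d b) (hxy : sigmaMap d x ≠ sigmaMap d y)
    (hiff : InOpenArc (sigmaMap d a) (sigmaMap d b) (sigmaMap d x) ↔
            InOpenArc (sigmaMap d a) (sigmaMap d b) (sigmaMap d y)) :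
    Nat.card {t : UnitAddCircle | sigmaMap d t = sigmaMap d a ∧ InOpenArc x y t} =
      Nat.card {t : UnitAddCircle | sigmaMap d t = sigmaMap d b ∧ InOpenArc x y t} := by
  have hd1 : 1 ≤ d := le_trans (by norm_num) hd
  have hxy' : x ≠ y := fun h => hxy (by rw [h])
  rw [count_arc d hd1 _ x y hxa hya hxy', count_arc d hd1 _ x y hxb hyb hxy']
  set A := circPos (sigmaMap d a) with hA
  set B := circPos (sigmaMap d b) with hB
  set w₁ : ℝ := (d:ℝ) * circPos x with hw₁def
  set w₂ : ℝ := (d:ℝ) * circPos x + (d:ℝ) * circPos (y - x) with hw₂def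
  have hw1 : Int.fract w₁ = circPos (sigmaMap d x) := by
    rw [hw₁def, ← circPos_coe, ← sigma_coe, coe_circPos]
  have hw2 : Int.fract w₂ = circPos (sigmaMap d y) := by
    have e : w₂ = (d:ℝ) * (circPos x + circPos (y - x)) := by rw [hw₂def]; ring
    have e2 : (((circPos x + circPos (y - x) : ℝ)) : UnitAddCircle) = y := by
      rw [AddCircle.coe_add, coe_circPos, coe_circPos]; abel
    rw [e, ← circPos_coe, ← sigma_coe, e2]
  set p := circPos (sigmaMap d x) with hp
  set q := circPos (sigmaMap d y) with hq
  have hne : ∀ {u v : UnitAddCircle}, u ≠ v → circPos u ≠ circPos v :=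
    fun h h' => h (circPos_injective h')
  have hiff' : ((A ≤ p ↔ B ≤ p) ↔ (A ≤ q ↔ B ≤ q)) := by
    rw [inOpenArc_iff hab hxa hxb, inOpenArc_iff hab hya hyb] at hiff
    by_cases hba : B < A
    · simpa [hba] using hiff
    · simp only [hA, hB] at hba hiff
      simp only [hba, iff_false] at hiff
      exact not_iff_not.mp hiff
  have hG := G_eq (circPos_mem (sigmaMap d a)) (circPos_mem (sigmaMap d b))
    (hne hxa) (hne hxb) (hne hya) (hne hyb) hiff' hw1 hw2
  have key : ⌊w₂ - A⌋ - ⌊w₁ - A⌋ = ⌊w₂ - B⌋ - ⌊w₁ - B⌋ := by linarith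
  exact congrArg Int.toNat key

/-- Lex's lemma: Let `a, b, x, y ∈ ℝ/ℤ` and `d ≥ 2`.  Suppose
`σ_d x, σ_d y ∉ {σ_d a, σ_d b}` and the chord `σ_d x σ_d y` is disjoint from the
chord `σ_d a σ_d b` (the endpoint pairs do not interleave and the chords are
nondegenerate and share no endpoints).  Then each of the two open arcs determined
by `x` and `y` contains the same number of `σ_d`-preimages of `σ_d a` as of
`σ_d b`. -/
theorem siblings_balanced (d : ℕ) (hd : 2 ≤ d) (a b x y : UnitAddCircle)
    (hxa : sigmaMap d x ≠ sigmaMap d a) (hxb : sigmaMap d x ≠ sigmaMap d b)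
    (hya : sigmaMap d y ≠ sigmaMap d a) (hyb : sigmaMap d y ≠ sigmaMap d b)
    (hab : sigmaMap d a ≠ sigmaMap d b) (hxy : sigmaMap d x ≠ sigmaMap d y)
    (hdisj : ¬ Xor' (InOpenArc (sigmaMap d a) (sigmaMap d b) (sigmaMap d x))
                    (InOpenArc (sigmaMap d a) (sigmaMap d b) (sigmaMap d y))) :
    Nat.card {t : UnitAddCircle | sigmaMap d t = sigmaMap d a ∧ InOpenArc x y t} =
      Nat.card {t : UnitAddCircle | sigmaMap d t = sigmaMap d b ∧ InOpenArc x y t} ∧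
    Nat.card {t : UnitAddCircle | sigmaMap d t = sigmaMap d a ∧ InOpenArc y x t} =
      Nat.card {t : UnitAddCircle | sigmaMap d t = sigmaMap d b ∧ InOpenArc y x t} := by
  have hiff := (not_xor _ _).mp hdisj
  exact ⟨one_arc d hd a b x y hxa hxb hya hyb hab hxy hiff,
    one_arc d hd a b y x hya hyb hxa hxb hab (Ne.symm hxy) hiff.symm⟩
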